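/- Let V be a shift on a complex Hilbert space H, i.e., an isometry with V^{*n} → 0 strongly, and let q be a complex number with |q| = 1. Then for every h ∈ H the series Σ_{n≥0} qⁿ Vⁿ(I − VV*)V^{*n}h converges in H, and the operator 𝔯_q : h ↦ Σ_{n≥0} qⁿ Vⁿ(I − VV*)V^{*n}h is a unitary on H satisfying 𝔯_q* = 𝔯_{q̄} and 𝔯_q V = q V 𝔯_q. -/

import Mathlib

/-!
The operators `Pₙ = Vⁿ(I - VV*)V*ⁿ` are mutually orthogonal projections with
`P₀ + ⋯ + Pₙ₋₁ = I - VⁿV*ⁿ`, and `‖VⁿV*ⁿh‖ = ‖V*ⁿh‖`, so for a shift they form a resolution of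
the identity. For any unimodular sequence `cₙ` the series `∑ cₙ Pₙ h` is an orthogonal expansion
with `‖∑ cₙ Pₙ h‖ = ‖h‖`; the resulting diagonal operator acts as `cₙ` on `ran Pₙ`, so these
operators multiply pointwise and have adjoint given by `c̄ₙ`, and hence are unitary. Taking
`cₙ = qⁿ` gives `𝔯_q`; since `Pₙ₊₁V = VPₙ` and `P₀V = 0`, `𝔯_q V = q V 𝔯_q`.
-/

open ContinuousLinearMap Filter Topology Finset
open scoped InnerProductSpace

section PairwiseOrthogonal

variable {𝕜 E ι : Type*} [RCLike 𝕜] [NormedAddCommGroup E] [InnerProductSpace 𝕜 E] {v : ι → E}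

theorem orthogonalFamily_span_singleton (hv : Pairwise fun i j => ⟪v i, v j⟫_𝕜 = 0) :
    OrthogonalFamily 𝕜 (fun i => 𝕜 ∙ v i) fun i => (𝕜 ∙ v i).subtypeₗᵢ :=
  orthogonalFamily_iff_pairwise.mpr fun i j hij =>
    (Submodule.isOrtho_span).mpr <| by
      rintro _ rfl _ rfl
      exact hv hij

theorem norm_sum_sq_of_pairwise_inner_eq_zero (hv : Pairwise fun i j => ⟪v i, v j⟫_𝕜 = 0)
    (s : Finset ι) : ‖∑ i ∈ s, v i‖ ^ 2 = ∑ i ∈ s, ‖v i‖ ^ 2 :=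
  (orthogonalFamily_span_singleton hv).norm_sum
    (fun i => ⟨v i, Submodule.mem_span_singleton_self _⟩) s

theorem summable_iff_summable_norm_sq_of_pairwise_inner_eq_zero [CompleteSpace E]
    (hv : Pairwise fun i j => ⟪v i, v j⟫_𝕜 = 0) :
    Summable v ↔ Summable fun i => ‖v i‖ ^ 2 :=
  (orthogonalFamily_span_singleton hv).summable_iff_norm_sq_summable
    (fun i => ⟨v i, Submodule.mem_span_singleton_self _⟩)

theorem HasSum.norm_sq_of_pairwise_inner_eq_zero (hv : Pairwise fun i j => ⟪v i, v j⟫_𝕜 = 0)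
    {a : E} (h : HasSum v a) : HasSum (fun i => ‖v i‖ ^ 2) (‖a‖ ^ 2) := by
  simpa only [HasSum, norm_sum_sq_of_pairwise_inner_eq_zero hv] using h.norm.pow 2

theorem hasSum_of_tendsto_sum_range_of_pairwise_inner_eq_zero [CompleteSpace E] {v : ℕ → E}
    (hv : Pairwise fun i j => ⟪v i, v j⟫_𝕜 = 0) {a : E}
    (h : Tendsto (fun n => ∑ i ∈ range n, v i) atTop (𝓝 a)) : HasSum v a := by
  have hnorm : HasSum (fun i => ‖v i‖ ^ 2) (‖a‖ ^ 2) := by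
    rw [hasSum_iff_tendsto_nat_of_nonneg (fun _ => sq_nonneg _)]
    simpa only [norm_sum_sq_of_pairwise_inner_eq_zero hv] using h.norm.pow 2
  exact ((summable_iff_summable_norm_sq_of_pairwise_inner_eq_zero hv).mpr
    hnorm.summable).hasSum_iff_tendsto_nat.mpr h

end PairwiseOrthogonal

section StarIsometry

variable {R : Type*} [Ring R] [StarRing R] {v : R}

/-- The orthogonal projection onto `vⁿ (ran v)ᗮ` when `v` is an isometry. -/
def wanderingProj (v : R) (n : ℕ) : R :=
  v ^ n * (1 - v * star v) * star v ^ n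

theorem star_pow_mul_pow_eq_one (hv : star v * v = 1) (n : ℕ) :
    star v ^ n * v ^ n = 1 := by
  induction n with
  | zero => simp
  | succ n ih => rw [pow_succ, pow_succ', mul_assoc, ← mul_assoc (star v), hv, one_mul, ih]

theorem star_pow_add_mul_pow (hv : star v * v = 1) (m n : ℕ) :
    star v ^ (m + n) * v ^ n = star v ^ m := by
  rw [pow_add, mul_assoc, star_pow_mul_pow_eq_one hv, mul_one]

theorem star_pow_mul_pow_add (hv : star v * v = 1) (m n : ℕ) :
    star v ^ m * v ^ (m + n) = v ^ n := by
  rw [pow_add, ← mul_assoc, star_pow_mul_pow_eq_one hv, one_mul]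

theorem wanderingProj_eq_sub (n : ℕ) :
    wanderingProj v n = v ^ n * star v ^ n - v ^ (n + 1) * star v ^ (n + 1) := by
  simp only [wanderingProj, mul_sub, mul_one, sub_mul, pow_succ, pow_succ' (star v), mul_assoc]

theorem sum_range_wanderingProj (n : ℕ) :
    ∑ i ∈ range n, wanderingProj v i = 1 - v ^ n * star v ^ n := by
  simp only [wanderingProj_eq_sub, sum_range_sub', pow_zero, mul_one]

theorem isSelfAdjoint_wanderingProj (n : ℕ) : IsSelfAdjoint (wanderingProj v n) := by
  simp [IsSelfAdjoint, wanderingProj, star_pow, mul_assoc]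

theorem wanderingProj_mul_wanderingProj (hv : star v * v = 1) (m n : ℕ) :
    wanderingProj v m * wanderingProj v n = if m = n then wanderingProj v n else 0 := by
  have hmul : wanderingProj v m * wanderingProj v n =
      v ^ m * (1 - v * star v) * (star v ^ m * v ^ n) * (1 - v * star v) * star v ^ n := by
    simp only [wanderingProj, mul_assoc]
  set e := 1 - v * star v
  have he_v : e * v = 0 := by rw [sub_mul, mul_assoc, hv]; simp
  have hstar_e : star v * e = 0 := by rw [mul_sub, ← mul_assoc, hv]; simp
  have he_e : e * e = e := by rw [mul_sub, mul_one, ← mul_assoc, he_v, zero_mul, sub_zero]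
  rw [hmul]
  split_ifs with hmn
  · rw [hmn, star_pow_mul_pow_eq_one hv, mul_one, mul_assoc (v ^ n) e e, he_e]
    rfl
  · rcases Nat.lt_or_gt_of_ne hmn with h | h
    · obtain ⟨k, rfl⟩ : ∃ k, n = m + (k + 1) := ⟨n - m - 1, by omega⟩
      rw [star_pow_mul_pow_add hv, pow_succ' v k, ← mul_assoc (v ^ m * e) v, mul_assoc (v ^ m) e v,
        he_v]
      simp
    · obtain ⟨k, rfl⟩ : ∃ k, m = k + 1 + n := ⟨m - n - 1, by omega⟩
      rw [star_pow_add_mul_pow hv, pow_succ (star v) k, mul_assoc _ (star v ^ k * star v) e,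
        mul_assoc (star v ^ k) (star v) e, hstar_e]
      simp

theorem wanderingProj_mul_wanderingProj_of_ne (hv : star v * v = 1) {m n : ℕ} (hmn : m ≠ n) :
    wanderingProj v m * wanderingProj v n = 0 := by
  rw [wanderingProj_mul_wanderingProj hv, if_neg hmn]

theorem isStarProjection_wanderingProj (hv : star v * v = 1) (n : ℕ) :
    IsStarProjection (wanderingProj v n) :=
  ⟨by rw [IsIdempotentElem, wanderingProj_mul_wanderingProj hv, if_pos rfl],
    isSelfAdjoint_wanderingProj n⟩

theorem wanderingProj_zero_mul (hv : star v * v = 1) : wanderingProj v 0 * v = 0 := by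
  rw [wanderingProj, pow_zero, pow_zero, one_mul, mul_one, sub_mul, mul_assoc, hv]
  simp

theorem wanderingProj_succ_mul (hv : star v * v = 1) (n : ℕ) :
    wanderingProj v (n + 1) * v = v * wanderingProj v n := by
  rw [wanderingProj, wanderingProj, mul_assoc _ (star v ^ (n + 1)), pow_succ (star v),
    mul_assoc (star v ^ n), hv, mul_one, pow_succ' v]
  simp only [mul_assoc]

end StarIsometry

section ResolutionOfIdentity

variable {𝕜 E ι : Type*} [RCLike 𝕜] [NormedAddCommGroup E] [InnerProductSpace 𝕜 E]
  [CompleteSpace E]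

theorem ContinuousLinearMap.inner_apply_apply_eq_zero_of_mul_eq_zero {P Q : E →L[𝕜] E}
    (hP : IsSelfAdjoint P) (hPQ : P * Q = 0) (x y : E) : ⟪P x, Q y⟫_𝕜 = 0 := by
  rw [← hP.adjoint_eq, adjoint_inner_left, show P (Q y) = (P * Q) y from rfl, hPQ, zero_apply,
    inner_zero_right]

structure IsResolutionOfIdentity (P : ι → E →L[𝕜] E) : Prop where
  isStarProjection : ∀ i, IsStarProjection (P i)
  mul_eq_zero : Pairwise fun i j => P i * P j = 0
  hasSum : ∀ x, HasSum (fun i => P i x) x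

namespace IsResolutionOfIdentity

variable {P : ι → E →L[𝕜] E}

theorem apply_apply_self (hP : IsResolutionOfIdentity P) (i : ι) (x : E) :
    P i (P i x) = P i x :=
  congr($((hP.isStarProjection i).isIdempotentElem.eq) x)

theorem apply_apply_of_ne (hP : IsResolutionOfIdentity P) {i j : ι} (hij : i ≠ j) (x : E) :
    P i (P j x) = 0 :=
  congr($(hP.mul_eq_zero hij) x)

theorem inner_apply_apply_of_ne (hP : IsResolutionOfIdentity P) {i j : ι} (hij : i ≠ j)
    (x y : E) : ⟪P i x, P j y⟫_𝕜 = 0 :=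
  inner_apply_apply_eq_zero_of_mul_eq_zero (hP.isStarProjection i).isSelfAdjoint
    (hP.mul_eq_zero hij) x y

theorem eq_of_forall_apply_eq (hP : IsResolutionOfIdentity P) {x y : E}
    (h : ∀ i, P i x = P i y) : x = y :=
  (hP.hasSum x).unique (by simpa only [h] using hP.hasSum y)

theorem pairwise_inner_smul_apply_eq_zero (hP : IsResolutionOfIdentity P) (c : ι → 𝕜) (x : E) :
    Pairwise fun i j => ⟪c i • P i x, c j • P j x⟫_𝕜 = 0 := by
  intro i j hij
  rw [inner_smul_left, inner_smul_right, hP.inner_apply_apply_of_ne hij, mul_zero, mul_zero]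

theorem hasSum_norm_sq_smul (hP : IsResolutionOfIdentity P) (c : ι → unitary 𝕜) (x : E) :
    HasSum (fun i => ‖(c i : 𝕜) • P i x‖ ^ 2) (‖x‖ ^ 2) := by
  simpa only [norm_smul, CStarRing.norm_coe_unitary, one_mul] using
    (hP.hasSum x).norm_sq_of_pairwise_inner_eq_zero
      fun _ _ hij => hP.inner_apply_apply_of_ne hij x x

theorem summable_smul (hP : IsResolutionOfIdentity P) (c : ι → unitary 𝕜) (x : E) :
    Summable fun i => (c i : 𝕜) • P i x :=
  (summable_iff_summable_norm_sq_of_pairwise_inner_eq_zero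
    (hP.pairwise_inner_smul_apply_eq_zero _ x)).mpr (hP.hasSum_norm_sq_smul c x).summable

theorem norm_tsum_smul (hP : IsResolutionOfIdentity P) (c : ι → unitary 𝕜) (x : E) :
    ‖∑' i, (c i : 𝕜) • P i x‖ = ‖x‖ := by
  have h := ((hP.summable_smul c x).hasSum.norm_sq_of_pairwise_inner_eq_zero
    (hP.pairwise_inner_smul_apply_eq_zero _ x)).unique (hP.hasSum_norm_sq_smul c x)
  exact (pow_left_inj₀ (norm_nonneg _) (norm_nonneg _) two_ne_zero).mp h

noncomputable def diagonal (hP : IsResolutionOfIdentity P) (c : ι → unitary 𝕜) : E →L[𝕜] E :=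
  LinearMap.mkContinuous
    { toFun x := ∑' i, (c i : 𝕜) • P i x
      map_add' x y := by
        simp only [map_add, smul_add]
        exact (hP.summable_smul c x).tsum_add (hP.summable_smul c y)
      map_smul' a x := by
        simp only [map_smul, smul_comm _ a, RingHom.id_apply]
        exact (hP.summable_smul c x).tsum_const_smul a }
    1 fun x => (hP.norm_tsum_smul c x).trans_le (one_mul _).ge

theorem hasSum_diagonal (hP : IsResolutionOfIdentity P) (c : ι → unitary 𝕜) (x : E) :
    HasSum (fun i => (c i : 𝕜) • P i x) (hP.diagonal c x) :=
  (hP.summable_smul c x).hasSum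

theorem apply_diagonal (hP : IsResolutionOfIdentity P) (c : ι → unitary 𝕜) (i : ι) (x : E) :
    P i (hP.diagonal c x) = (c i : 𝕜) • P i x := by
  classical
  refine ((hP.hasSum_diagonal c x).mapL (P i)).unique ?_
  convert hasSum_ite_eq i ((c i : 𝕜) • P i x) using 2 with j
  split_ifs with hji
  · rw [hji, map_smul, hP.apply_apply_self]
  · rw [map_smul, hP.apply_apply_of_ne (Ne.symm hji), smul_zero]

theorem diagonal_apply_apply (hP : IsResolutionOfIdentity P) (c : ι → unitary 𝕜) (i : ι)
    (x : E) : hP.diagonal c (P i x) = (c i : 𝕜) • P i x := by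
  refine hP.eq_of_forall_apply_eq fun j => ?_
  rw [apply_diagonal, map_smul]
  by_cases hji : j = i
  · rw [hji, hP.apply_apply_self]
  · rw [hP.apply_apply_of_ne hji, smul_zero, smul_zero]

theorem diagonal_one (hP : IsResolutionOfIdentity P) : hP.diagonal 1 = 1 :=
  ext fun x => hP.eq_of_forall_apply_eq fun i => by
    rw [apply_diagonal, Pi.one_apply, OneMemClass.coe_one, one_smul, one_apply_eq_self]

theorem diagonal_mul (hP : IsResolutionOfIdentity P) (c d : ι → unitary 𝕜) :
    hP.diagonal (c * d) = hP.diagonal c * hP.diagonal d :=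
  ext fun x => hP.eq_of_forall_apply_eq fun i => by
    rw [apply_diagonal, mul_apply_eq_comp, apply_diagonal, apply_diagonal, smul_smul, Pi.mul_apply,
      Submonoid.coe_mul]

theorem adjoint_diagonal (hP : IsResolutionOfIdentity P) (c : ι → unitary 𝕜) :
    adjoint (hP.diagonal c) = hP.diagonal (star c) := by
  have hcomp (i : ι) : hP.diagonal c ∘L P i = (c i : 𝕜) • P i :=
    ext (hP.diagonal_apply_apply c i)
  refine ext fun x => hP.eq_of_forall_apply_eq fun i => ?_
  have hPi : adjoint (P i) = P i := (hP.isStarProjection i).isSelfAdjoint.adjoint_eq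
  calc P i (adjoint (hP.diagonal c) x)
      = adjoint (hP.diagonal c ∘L P i) x := by rw [adjoint_comp, hPi, comp_apply]
    _ = star (c i : 𝕜) • P i x := by rw [hcomp, map_smulₛₗ, smul_apply, hPi]; rfl
    _ = P i (hP.diagonal (star c) x) := by rw [apply_diagonal, Pi.star_apply, Unitary.coe_star]

theorem diagonal_mem_unitary (hP : IsResolutionOfIdentity P) (c : ι → unitary 𝕜) :
    hP.diagonal c ∈ unitary (E →L[𝕜] E) := by
  have hstar_mul : star c * c = 1 := funext fun i => Unitary.star_mul_self (c i)
  have hmul_star : c * star c = 1 := funext fun i => Unitary.mul_star_self (c i)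
  rw [Unitary.mem_iff, star_eq_adjoint, adjoint_diagonal, ← diagonal_mul, ← diagonal_mul,
    hstar_mul, hmul_star, diagonal_one, and_self]

end IsResolutionOfIdentity

end ResolutionOfIdentity

section Shift

variable {𝕜 E : Type*} [RCLike 𝕜] [NormedAddCommGroup E] [InnerProductSpace 𝕜 E]
  [CompleteSpace E] {V : E →L[𝕜] E}

theorem isResolutionOfIdentity_wanderingProj (hV : adjoint V ∘L V = 1)
    (hshift : ∀ x, Tendsto (fun n => (adjoint V ^ n) x) atTop (𝓝 0)) :
    IsResolutionOfIdentity (wanderingProj V) where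
  isStarProjection := isStarProjection_wanderingProj hV
  mul_eq_zero _ _ := wanderingProj_mul_wanderingProj_of_ne hV
  hasSum x := by
    have hpow_isometry (n : ℕ) (y : E) : ‖(V ^ n) y‖ = ‖y‖ := by
      refine (norm_map_iff_adjoint_comp_self _).mpr ?_ y
      rw [← star_eq_adjoint, star_pow]
      exact star_pow_mul_pow_eq_one hV n
    have hpartial (n : ℕ) :
        ∑ i ∈ range n, wanderingProj V i x = x - (V ^ n) ((adjoint V ^ n) x) := by
      rw [← _root_.sum_apply, sum_range_wanderingProj]
      rfl
    refine hasSum_of_tendsto_sum_range_of_pairwise_inner_eq_zero (fun m n hmn =>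
      inner_apply_apply_eq_zero_of_mul_eq_zero (isSelfAdjoint_wanderingProj m)
        (wanderingProj_mul_wanderingProj_of_ne hV hmn) x x) ?_
    have htail : Tendsto (fun n => (V ^ n) ((adjoint V ^ n) x)) atTop (𝓝 0) := by
      rw [tendsto_zero_iff_norm_tendsto_zero]
      simpa only [hpow_isometry, norm_zero] using (hshift x).norm
    simpa only [hpartial, sub_zero] using tendsto_const_nhds.sub htail

theorem diagonal_pow_comp_eq_smul_comp (hV : adjoint V ∘L V = 1)
    (hP : IsResolutionOfIdentity (wanderingProj V)) (u : unitary 𝕜) :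
    hP.diagonal (u ^ ·) ∘L V = (u : 𝕜) • (V ∘L hP.diagonal (u ^ ·)) := by
  have hV' : star V * V = 1 := hV
  refine ext fun x => hP.eq_of_forall_apply_eq fun n => ?_
  rw [comp_apply, smul_apply, comp_apply, map_smul, hP.apply_diagonal]
  cases n with
  | zero =>
    have h0 (y : E) : wanderingProj V 0 (V y) = 0 := by
      rw [← mul_apply_eq_comp, wanderingProj_zero_mul hV', zero_apply]
    rw [h0, h0, smul_zero, smul_zero]
  | succ n =>
    have hsucc (y : E) : wanderingProj V (n + 1) (V y) = V (wanderingProj V n y) := by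
      rw [← mul_apply_eq_comp, wanderingProj_succ_mul hV', mul_apply_eq_comp]
    rw [hsucc, hsucc, hP.apply_diagonal, map_smul, smul_smul, SubmonoidClass.coe_pow,
      SubmonoidClass.coe_pow, ← pow_succ']

end Shift

theorem stmt_8 {H : Type*} [NormedAddCommGroup H] [InnerProductSpace ℂ H] [CompleteSpace H]
    (V : H →L[ℂ] H) (hiso : adjoint V ∘L V = 1)
    (hshift : ∀ h : H, Tendsto (fun n : ℕ => ((adjoint V) ^ n) h) atTop (nhds 0))
    (q : ℂ) (hq : ‖q‖ = 1) :
    (∀ h : H, Summable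
      (fun n : ℕ => q ^ n • ((V ^ n) ((1 - V ∘L adjoint V) (((adjoint V) ^ n) h))))) ∧
    ∃ 𝔯q : H →L[ℂ] H,
      (∀ h : H, HasSum
        (fun n : ℕ => q ^ n • ((V ^ n) ((1 - V ∘L adjoint V) (((adjoint V) ^ n) h))))
        (𝔯q h)) ∧
      adjoint 𝔯q ∘L 𝔯q = 1 ∧ 𝔯q ∘L adjoint 𝔯q = 1 ∧
      (∀ h : H, HasSum
        (fun n : ℕ => (starRingEnd ℂ q) ^ n •
          ((V ^ n) ((1 - V ∘L adjoint V) (((adjoint V) ^ n) h))))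
        (adjoint 𝔯q h)) ∧
      𝔯q ∘L V = q • (V ∘L 𝔯q) := by
  let u : unitary ℂ := ⟨q, Unitary.mem_iff_star_mul_self.mpr <| by
    rw [RCLike.star_def, RCLike.conj_mul, hq]; norm_num⟩
  have hP := isResolutionOfIdentity_wanderingProj hiso hshift
  have hsum (h : H) := hP.hasSum_diagonal (u ^ ·) h
  obtain ⟨hunit_left, hunit_right⟩ := Unitary.mem_iff.mp (hP.diagonal_mem_unitary (u ^ ·))
  refine ⟨fun h => (hsum h).summable, hP.diagonal (u ^ ·), hsum, hunit_left, hunit_right,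
    fun h => ?_, diagonal_pow_comp_eq_smul_comp hiso hP u⟩
  rw [hP.adjoint_diagonal]
  convert hP.hasSum_diagonal (star (u ^ ·)) h using 3 with n
  · rw [Pi.star_apply, Unitary.coe_star, SubmonoidClass.coe_pow, star_pow]
    rfl
  · rfl
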